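/- Let n ≥ 1 be a natural number and let s(n) = 0 if n is even and s(n) = * if n is odd. Then, as combinatorial games, n + { n + 1 | s(n) } + { n + 1 | s(n) } is equivalent to (2n + 1) + s(n). -/

import Mathlib

universe u

namespace SetTheory

/-- Combinatorial pregames, as in `Mathlib.SetTheory.Game.PGame` of the older Mathlib
(removed from the current Mathlib): a pregame is given by its Left and Right options. -/
inductive PGame : Type (u + 1)
  | mk : ∀ α β : Type u, (α → PGame) → (β → PGame) → PGame

namespace PGame

/-- The pair `(x ≤ y, x ⧏ y)`, defined by simultaneous recursion as in the older Mathlib: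
`x ≤ y` iff `∀ i, xL i ⧏ y` and `∀ j, x ⧏ yR j`; `x ⧏ y` iff `∃ i, x ≤ yL i` or `∃ j, xR j ≤ y`. -/
noncomputable def leLF (x : PGame.{u}) : PGame.{u} → Prop × Prop :=
  PGame.rec (motive := fun _ => PGame.{u} → Prop × Prop)
    (fun _ _ _ _ IHxl IHxr y =>
      PGame.rec (motive := fun _ => Prop × Prop)
        (fun yl yr yL yR IHyl IHyr =>
          ((∀ i, (IHxl i (mk yl yr yL yR)).2) ∧ ∀ j, (IHyr j).2,
            (∃ i, (IHyl i).1) ∨ ∃ j, (IHxr j (mk yl yr yL yR)).1)) y) x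

noncomputable instance : LE PGame.{u} :=
  ⟨fun x y => (leLF x y).1⟩

/-- Equivalence of pregames: `x ≤ y ∧ y ≤ x`. -/
def Equiv (x y : PGame.{u}) : Prop :=
  x ≤ y ∧ y ≤ x

instance : HasEquiv PGame.{u} :=
  ⟨Equiv⟩

instance : Zero PGame.{u} :=
  ⟨⟨PEmpty, PEmpty, PEmpty.elim, PEmpty.elim⟩⟩

instance : One PGame.{u} :=
  ⟨⟨PUnit, PEmpty, fun _ => 0, PEmpty.elim⟩⟩

/-- Negation: swap the roles of Left and Right. -/
def neg : PGame.{u} → PGame.{u}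
  | ⟨l, r, L, R⟩ => ⟨r, l, fun i => neg (R i), fun i => neg (L i)⟩

instance : Neg PGame.{u} :=
  ⟨neg⟩

/-- Disjunctive sum of pregames. -/
noncomputable def add (x : PGame.{u}) : PGame.{u} → PGame.{u} :=
  PGame.rec (motive := fun _ => PGame.{u} → PGame.{u})
    (fun xl xr _ _ IHxl IHxr y =>
      PGame.rec (motive := fun _ => PGame.{u})
        (fun yl yr yL yR IHyl IHyr =>
          mk (xl ⊕ yl) (xr ⊕ yr)
            (Sum.rec (fun i => IHxl i (mk yl yr yL yR)) IHyl)
            (Sum.rec (fun i => IHxr i (mk yl yr yL yR)) IHyr)) y) x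

noncomputable instance : Add PGame.{u} :=
  ⟨add⟩

noncomputable instance : NatCast PGame.{u} :=
  ⟨Nat.unaryCast⟩

/-- The pregame `* = {0 | 0}`. -/
def star : PGame.{u} :=
  ⟨PUnit, PUnit, fun _ => 0, fun _ => 0⟩

end PGame

end SetTheory

open SetTheory

namespace SnortFormal

/-- The state of a vertex in a Snort position: untinted (`free`), tinted Blue,
tinted Red, or removed from play (`dead`). -/
inductive Cell : Type
  | free | blue | red | dead
deriving DecidableEq

/-- The effect on a neighbouring cell of Left playing next to it:
it becomes tinted Blue, and if it was tinted Red it is removed. -/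
def tintB : Cell → Cell
  | .free => .blue
  | .blue => .blue
  | .red  => .dead
  | .dead => .dead

/-- The effect on a neighbouring cell of Right playing next to it. -/
def tintR : Cell → Cell
  | .free => .red
  | .blue => .dead
  | .red  => .red
  | .dead => .dead

/-- The position resulting from Left playing on vertex `v`: `v` is removed and
all of its neighbours are tinted Blue (doubly-tinted vertices are removed). -/
def moveL {V : Type} [DecidableEq V] (G : SimpleGraph V) [DecidableRel G.Adj]
    (c : V → Cell) (v : V) : V → Cell :=
  fun w => if w = v then .dead else if G.Adj v w then tintB (c w) else c w

/-- The position resulting from Right playing on vertex `v`. -/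
def moveR {V : Type} [DecidableEq V] (G : SimpleGraph V) [DecidableRel G.Adj]
    (c : V → Cell) (v : V) : V → Cell :=
  fun w => if w = v then .dead else if G.Adj v w then tintR (c w) else c w

/-- The vertices still present in the position. -/
def aliveSet {V : Type} [Fintype V] (c : V → Cell) : Finset V :=
  Finset.univ.filter (fun v => c v ≠ Cell.dead)

theorem alive_move_lt {V : Type} [Fintype V] [DecidableEq V]
    (G : SimpleGraph V) [DecidableRel G.Adj] (c : V → Cell) (v : V)
    (hv : c v ≠ Cell.dead) (f : Cell → Cell) (hf : f Cell.dead = Cell.dead) :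
    (aliveSet (fun w => if w = v then Cell.dead else if G.Adj v w then f (c w) else c w)).card
      < (aliveSet c).card := by
  apply Finset.card_lt_card
  constructor
  · intro w hw
    simp only [aliveSet, Finset.mem_filter, Finset.mem_univ, true_and] at hw ⊢
    by_cases h : w = v
    · simp [h] at hw
    · simp only [h, if_false] at hw
      by_cases hadj : G.Adj v w
      · simp only [hadj, if_true] at hw
        intro hd
        rw [hd, hf] at hw
        exact hw rfl
      · simpa [hadj] using hw
  · intro hsub
    have hv' : v ∈ aliveSet c := by
      simp [aliveSet, hv]
    have := hsub hv'
    simp [aliveSet] at this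

/-- The combinatorial pregame given by playing Snort on the graph `G` with
tinting `c`. Left may play on any vertex that is free or tinted Blue; Right
may play on any vertex that is free or tinted Red. -/
def snort {V : Type} [Fintype V] [DecidableEq V] (G : SimpleGraph V) [DecidableRel G.Adj]
    (c : V → Cell) : PGame :=
  PGame.mk {v : V // c v = Cell.free ∨ c v = Cell.blue}
    {v : V // c v = Cell.free ∨ c v = Cell.red}
    (fun v => snort G (moveL G c v.1))
    (fun v => snort G (moveR G c v.1))
termination_by (aliveSet c).card
decreasing_by
  · exact alive_move_lt G c v.1 (by rcases v.2 with h | h <;> simp [h]) tintB rfl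
  · exact alive_move_lt G c v.1 (by rcases v.2 with h | h <;> simp [h]) tintR rfl

/-- Build a simple graph from a (not necessarily symmetric) Boolean adjacency
function by symmetrizing and removing loops. -/
def graphOfBool {W : Type} (f : W → W → Bool) : SimpleGraph W where
  Adj u v := u ≠ v ∧ (f u v ∨ f v u)
  symm := ⟨fun _ _ ⟨h1, h2⟩ => ⟨h1.symm, h2.symm⟩⟩
  loopless := ⟨fun _ h => h.1 rfl⟩

instance {W : Type} [DecidableEq W] (f : W → W → Bool) :
    DecidableRel (graphOfBool f).Adj :=
  fun u v => inferInstanceAs (Decidable (u ≠ v ∧ (f u v ∨ f v u)))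

/-- The game `{A | B}` with unique Left option `A` and unique Right option `B`. -/
def ofPair (A B : PGame) : PGame :=
  PGame.mk PUnit PUnit (fun _ => A) (fun _ => B)

/-- The game `±{A, B} = {A, B | −A, −B}`. -/
def pmPair (A B : PGame) : PGame :=
  PGame.mk Bool Bool (fun x => if x then A else B) (fun x => if x then -A else -B)


/-- `s(n)`: the game `0` if `n` is even and `* = {0 | 0}` if `n` is odd. -/
def sgame (n : ℕ) : PGame := if Even n then 0 else PGame.star

/-- The star `K_{1,n}`: centre `none`, leaves `some i`. -/
abbrev starGraph (n : ℕ) : SimpleGraph (Option (Fin n)) :=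
  graphOfBool (fun u v =>
    match u, v with
    | none, some _ => true
    | _, _ => false)

end SnortFormal

attribute [-instance] Quotient.instLE_mathlib Quotient.instPreorder

namespace SetTheory

namespace PGame

def LeftMoves : PGame.{u} → Type u
  | mk l _ _ _ => l

def RightMoves : PGame.{u} → Type u
  | mk _ r _ _ => r

def moveLeft : (g : PGame.{u}) → LeftMoves g → PGame.{u}
  | mk _ _ L _ => L

def moveRight : (g : PGame.{u}) → RightMoves g → PGame.{u}
  | mk _ _ _ R => R

def LF (x y : PGame.{u}) : Prop :=
  (leLF x y).2

infix:50 " ⧏ " => PGame.LF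

theorem le_iff_forall_lf {x y : PGame.{u}} :
    x ≤ y ↔ (∀ i, x.moveLeft i ⧏ y) ∧ ∀ j, x ⧏ y.moveRight j := by
  cases x; cases y; exact Iff.rfl

theorem lf_iff_exists_le {x y : PGame.{u}} :
    x ⧏ y ↔ (∃ i, x ≤ y.moveLeft i) ∨ ∃ j, x.moveRight j ≤ y := by
  cases x; cases y; exact Iff.rfl

theorem le_of_forall_lf {x y : PGame.{u}} (h₁ : ∀ i, x.moveLeft i ⧏ y)
    (h₂ : ∀ j, x ⧏ y.moveRight j) : x ≤ y :=
  le_iff_forall_lf.2 ⟨h₁, h₂⟩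

theorem lf_of_le_moveLeft {x y : PGame.{u}} {i : y.LeftMoves} (h : x ≤ y.moveLeft i) : x ⧏ y :=
  lf_iff_exists_le.2 (Or.inl ⟨i, h⟩)

theorem lf_of_moveRight_le {x y : PGame.{u}} {j : x.RightMoves} (h : x.moveRight j ≤ y) :
    x ⧏ y :=
  lf_iff_exists_le.2 (Or.inr ⟨j, h⟩)

theorem lf_moveRight_of_le {x y : PGame.{u}} (h : x ≤ y) (j : y.RightMoves) :
    x ⧏ y.moveRight j :=
  (le_iff_forall_lf.1 h).2 j

theorem moveLeft_lf_of_le {x y : PGame.{u}} (h : x ≤ y) (i : x.LeftMoves) :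
    x.moveLeft i ⧏ y :=
  (le_iff_forall_lf.1 h).1 i

theorem not_le_aux : ∀ (x y : PGame.{u}), (¬ x ≤ y ↔ y ⧏ x) ∧ (¬ y ≤ x ↔ x ⧏ y) := by
  intro x
  induction x with
  | mk xl xr xL xR IHxl IHxr =>
    intro y
    induction y with
    | mk yl yr yL yR IHyl IHyr =>
      constructor
      · rw [le_iff_forall_lf, lf_iff_exists_le, not_and_or, not_forall, not_forall]
        refine or_congr (exists_congr fun i => ?_) (exists_congr fun j => ?_)
        · exact not_iff_comm.1 (IHxl i _).2
        · exact not_iff_comm.1 (IHyr j).2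
      · rw [le_iff_forall_lf, lf_iff_exists_le, not_and_or, not_forall, not_forall]
        refine or_congr (exists_congr fun i => ?_) (exists_congr fun j => ?_)
        · exact not_iff_comm.1 (IHyl i).1
        · exact not_iff_comm.1 (IHxr j _).1

theorem not_le {x y : PGame.{u}} : ¬ x ≤ y ↔ y ⧏ x :=
  (not_le_aux x y).1

theorem not_lf {x y : PGame.{u}} : ¬ x ⧏ y ↔ y ≤ x := by
  rw [← PGame.not_le, not_not]

theorem le_trans_aux {x y z : PGame.{u}}
    (h₁ : ∀ {i}, y ≤ z → z ≤ x.moveLeft i → y ≤ x.moveLeft i)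
    (h₂ : ∀ {j}, z.moveRight j ≤ x → x ≤ y → z.moveRight j ≤ y) (hxy : x ≤ y) (hyz : y ≤ z) :
    x ≤ z :=
  le_of_forall_lf
    (fun i => PGame.not_le.1 fun h => PGame.not_lf.2 (h₁ hyz h) (moveLeft_lf_of_le hxy i))
    fun j => PGame.not_le.1 fun h => PGame.not_lf.2 (h₂ h hxy) (lf_moveRight_of_le hyz j)

theorem le_refl' (x : PGame.{u}) : x ≤ x := by
  induction x with
  | mk _ _ _ _ IHl IHr =>
    exact le_of_forall_lf (fun i => lf_of_le_moveLeft (IHl i)) (fun i => lf_of_moveRight_le (IHr i))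

theorem le_trans' : ∀ (x y z : PGame.{u}),
    (x ≤ y → y ≤ z → x ≤ z) ∧ (y ≤ z → z ≤ x → y ≤ x) ∧ (z ≤ x → x ≤ y → z ≤ y) := by
  intro x
  induction x with
  | mk _ _ _ _ IHxl IHxr =>
    intro y
    induction y with
    | mk _ _ _ _ IHyl IHyr =>
      intro z
      induction z with
      | mk _ _ _ _ IHzl IHzr =>
        exact
          ⟨le_trans_aux (fun {i} => (IHxl i _ _).2.1) fun {j} => (IHzr j).2.2,
            le_trans_aux (fun {i} => (IHyl i _).2.2) fun {j} => (IHxr j _ _).1,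
            le_trans_aux (fun {i} => (IHzl i).1) fun {j} => (IHyr j _).2.1⟩

instance : Preorder PGame.{u} where
  le := fun x y => x ≤ y
  le_refl := le_refl'
  le_trans := fun x y z => (le_trans' x y z).1

theorem lf_of_lt {x y : PGame.{u}} (h : x < y) : x ⧏ y :=
  PGame.not_le.1 (lt_iff_le_not_ge.1 h).2

theorem equiv_rfl {x : PGame.{u}} : x ≈ x :=
  ⟨le_rfl, le_rfl⟩

theorem equiv_symm {x y : PGame.{u}} (h : x ≈ y) : y ≈ x :=
  ⟨h.2, h.1⟩

theorem equiv_trans {x y z : PGame.{u}} (h₁ : x ≈ y) (h₂ : y ≈ z) : x ≈ z :=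
  ⟨h₁.1.trans h₂.1, h₂.2.trans h₁.2⟩

instance setoid : Setoid PGame.{u} :=
  ⟨Equiv, ⟨fun _ => equiv_rfl, equiv_symm, equiv_trans⟩⟩

theorem equiv_of_mk_equiv {x y : PGame.{u}} (L : x.LeftMoves ≃ y.LeftMoves)
    (R : x.RightMoves ≃ y.RightMoves) (hl : ∀ i, x.moveLeft i ≈ y.moveLeft (L i))
    (hr : ∀ j, x.moveRight j ≈ y.moveRight (R j)) : x ≈ y := by
  constructor
  · refine le_of_forall_lf (fun i => lf_of_le_moveLeft (hl i).1) (fun j => ?_)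
    have h := hr (R.symm j)
    rw [R.apply_symm_apply] at h
    exact lf_of_moveRight_le h.1
  · refine le_of_forall_lf (fun i => ?_) (fun j => lf_of_moveRight_le (hr j).2)
    have h := hl (L.symm i)
    rw [L.apply_symm_apply] at h
    exact lf_of_le_moveLeft h.2

theorem leftMoves_add (x y : PGame.{u}) : (x + y).LeftMoves = (x.LeftMoves ⊕ y.LeftMoves) := by
  cases x; cases y; rfl

theorem rightMoves_add (x y : PGame.{u}) :
    (x + y).RightMoves = (x.RightMoves ⊕ y.RightMoves) := by
  cases x; cases y; rfl

def toLeftMovesAdd {x y : PGame.{u}} : x.LeftMoves ⊕ y.LeftMoves ≃ (x + y).LeftMoves :=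
  Equiv.cast (leftMoves_add x y).symm

def toRightMovesAdd {x y : PGame.{u}} : x.RightMoves ⊕ y.RightMoves ≃ (x + y).RightMoves :=
  Equiv.cast (rightMoves_add x y).symm

theorem add_moveLeft_inl {x y : PGame.{u}} (i : x.LeftMoves) :
    (x + y).moveLeft (toLeftMovesAdd (Sum.inl i)) = x.moveLeft i + y := by
  cases x; cases y; rfl

theorem add_moveLeft_inr {x y : PGame.{u}} (i : y.LeftMoves) :
    (x + y).moveLeft (toLeftMovesAdd (Sum.inr i)) = x + y.moveLeft i := by
  cases x; cases y; rfl

theorem add_moveRight_inl {x y : PGame.{u}} (i : x.RightMoves) :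
    (x + y).moveRight (toRightMovesAdd (Sum.inl i)) = x.moveRight i + y := by
  cases x; cases y; rfl

theorem add_moveRight_inr {x y : PGame.{u}} (i : y.RightMoves) :
    (x + y).moveRight (toRightMovesAdd (Sum.inr i)) = x + y.moveRight i := by
  cases x; cases y; rfl

theorem leftMoves_add_cases {x y : PGame.{u}} (k : (x + y).LeftMoves)
    {P : (x + y).LeftMoves → Prop} (hl : ∀ i, P (toLeftMovesAdd (Sum.inl i)))
    (hr : ∀ i, P (toLeftMovesAdd (Sum.inr i))) : P k := by
  obtain ⟨k', rfl⟩ := toLeftMovesAdd.surjective k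
  rcases k' with i | i
  · exact hl i
  · exact hr i

theorem rightMoves_add_cases {x y : PGame.{u}} (k : (x + y).RightMoves)
    {P : (x + y).RightMoves → Prop} (hl : ∀ j, P (toRightMovesAdd (Sum.inl j)))
    (hr : ∀ j, P (toRightMovesAdd (Sum.inr j))) : P k := by
  obtain ⟨k', rfl⟩ := toRightMovesAdd.surjective k
  rcases k' with j | j
  · exact hl j
  · exact hr j

theorem leftMoves_neg (x : PGame.{u}) : (-x).LeftMoves = x.RightMoves := by
  cases x; rfl

theorem rightMoves_neg (x : PGame.{u}) : (-x).RightMoves = x.LeftMoves := by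
  cases x; rfl

def toLeftMovesNeg {x : PGame.{u}} : x.RightMoves ≃ (-x).LeftMoves :=
  Equiv.cast (leftMoves_neg x).symm

def toRightMovesNeg {x : PGame.{u}} : x.LeftMoves ≃ (-x).RightMoves :=
  Equiv.cast (rightMoves_neg x).symm

theorem moveLeft_neg' {x : PGame.{u}} (i : (-x).LeftMoves) :
    (-x).moveLeft i = -x.moveRight (toLeftMovesNeg.symm i) := by
  cases x; rfl

theorem moveRight_neg' {x : PGame.{u}} (i : (-x).RightMoves) :
    (-x).moveRight i = -x.moveLeft (toRightMovesNeg.symm i) := by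
  cases x; rfl

theorem zero_le_lf {x : PGame.{u}} : 0 ≤ x ↔ ∀ j, 0 ⧏ x.moveRight j :=
  ⟨fun h => (le_iff_forall_lf.1 h).2,
    fun h => le_iff_forall_lf.2 ⟨fun i => PEmpty.elim i, h⟩⟩

theorem le_zero_lf {x : PGame.{u}} : x ≤ 0 ↔ ∀ i, x.moveLeft i ⧏ 0 :=
  ⟨fun h => (le_iff_forall_lf.1 h).1,
    fun h => le_iff_forall_lf.2 ⟨h, fun j => PEmpty.elim j⟩⟩

theorem add_le_lf_add_right : ∀ (x y z : PGame.{u}),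
    (x ≤ y → x + z ≤ y + z) ∧ (x ⧏ y → x + z ⧏ y + z) := by
  intro x
  induction x with
  | mk xl xr xL xR IHxl IHxr =>
    intro y
    induction y with
    | mk yl yr yL yR IHyl IHyr =>
      intro z
      induction z with
      | mk zl zr zL zR IHzl IHzr =>
        refine ⟨fun h => ?_, fun h => ?_⟩
        · refine le_of_forall_lf (fun i => ?_) (fun j => ?_)
          · obtain ⟨k, rfl⟩ := toLeftMovesAdd.surjective i
            rcases k with i | i
            · rw [add_moveLeft_inl]
              exact (IHxl i _ _).2 (moveLeft_lf_of_le h i)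
            · rw [add_moveLeft_inr]
              refine lf_of_le_moveLeft (i := toLeftMovesAdd (Sum.inr i)) ?_
              rw [add_moveLeft_inr]
              exact (IHzl i).1 h
          · obtain ⟨k, rfl⟩ := toRightMovesAdd.surjective j
            rcases k with j | j
            · rw [add_moveRight_inl]
              exact (IHyr j _).2 (lf_moveRight_of_le h j)
            · rw [add_moveRight_inr]
              refine lf_of_moveRight_le (j := toRightMovesAdd (Sum.inr j)) ?_
              rw [add_moveRight_inr]
              exact (IHzr j).1 h
        · rcases lf_iff_exists_le.1 h with ⟨i, hi⟩ | ⟨j, hj⟩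
          · refine lf_of_le_moveLeft (i := toLeftMovesAdd (Sum.inl i)) ?_
            rw [add_moveLeft_inl]
            exact (IHyl i _).1 hi
          · refine lf_of_moveRight_le (j := toRightMovesAdd (Sum.inl j)) ?_
            rw [add_moveRight_inl]
            exact (IHxr j _ _).1 hj

theorem add_le_add_right' {x y z : PGame.{u}} (h : x ≤ y) : x + z ≤ y + z :=
  (add_le_lf_add_right x y z).1 h

theorem add_comm_equiv : ∀ (x y : PGame.{u}), x + y ≈ y + x := by
  intro x
  induction x with
  | mk xl xr xL xR IHxl IHxr =>
    intro y
    induction y with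
    | mk yl yr yL yR IHyl IHyr =>
      refine equiv_of_mk_equiv (Equiv.sumComm _ _) (Equiv.sumComm _ _) (fun i => ?_) (fun j => ?_)
      · rcases i with i | i
        · exact IHxl i _
        · exact IHyl i
      · rcases j with j | j
        · exact IHxr j _
        · exact IHyr j

theorem add_assoc_equiv : ∀ (x y z : PGame.{u}), x + y + z ≈ x + (y + z) := by
  intro x
  induction x with
  | mk xl xr xL xR IHxl IHxr =>
    intro y
    induction y with
    | mk yl yr yL yR IHyl IHyr =>
      intro z
      induction z with
      | mk zl zr zL zR IHzl IHzr =>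
        refine equiv_of_mk_equiv (Equiv.sumAssoc _ _ _) (Equiv.sumAssoc _ _ _)
          (fun i => ?_) (fun j => ?_)
        · rcases i with (i | i) | i
          · exact IHxl i _ _
          · exact IHyl i _
          · exact IHzl i
        · rcases j with (j | j) | j
          · exact IHxr j _ _
          · exact IHyr j _
          · exact IHzr j

theorem add_zero_equiv : ∀ (x : PGame.{u}), x + 0 ≈ x := by
  intro x
  induction x with
  | mk xl xr xL xR IHxl IHxr =>
    refine equiv_of_mk_equiv (Equiv.sumEmpty _ _) (Equiv.sumEmpty _ _) (fun i => ?_) (fun j => ?_)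
    · rcases i with i | i
      · exact IHxl i
      · exact i.elim
    · rcases j with j | j
      · exact IHxr j
      · exact j.elim

theorem zero_add_equiv : ∀ (x : PGame.{u}), 0 + x ≈ x := by
  intro x
  induction x with
  | mk xl xr xL xR IHxl IHxr =>
    refine equiv_of_mk_equiv (Equiv.emptySum _ _) (Equiv.emptySum _ _) (fun i => ?_) (fun j => ?_)
    · rcases i with i | i
      · exact i.elim
      · exact IHxl i
    · rcases j with j | j
      · exact j.elim
      · exact IHxr j

theorem add_le_add_left' {x y z : PGame.{u}} (h : x ≤ y) : z + x ≤ z + y :=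
  (add_comm_equiv z x).1.trans ((add_le_add_right' h).trans (add_comm_equiv y z).1)

theorem add_congr {w x y z : PGame.{u}} (h₁ : w ≈ x) (h₂ : y ≈ z) : w + y ≈ x + z :=
  ⟨(add_le_add_right' h₁.1).trans (add_le_add_left' h₂.1),
    (add_le_add_right' h₁.2).trans (add_le_add_left' h₂.2)⟩

theorem neg_le_lf_neg_iff : ∀ (x y : PGame.{u}), (-y ≤ -x ↔ x ≤ y) ∧ (-y ⧏ -x ↔ x ⧏ y) := by
  intro x
  induction x with
  | mk xl xr xL xR IHxl IHxr =>
    intro y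
    induction y with
    | mk yl yr yL yR IHyl IHyr =>
      constructor
      · show ((∀ i, -(yR i) ⧏ -(mk xl xr xL xR)) ∧ ∀ j, -(mk yl yr yL yR) ⧏ -(xL j)) ↔
          ((∀ i, xL i ⧏ mk yl yr yL yR) ∧ ∀ j, mk xl xr xL xR ⧏ yR j)
        rw [and_comm]
        exact and_congr (forall_congr' fun i => (IHxl i _).2) (forall_congr' fun j => (IHyr j).2)
      · show ((∃ i, -(mk yl yr yL yR) ≤ -(xR i)) ∨ ∃ j, -(yL j) ≤ -(mk xl xr xL xR)) ↔
          ((∃ i, mk xl xr xL xR ≤ yL i) ∨ ∃ j, xR j ≤ mk yl yr yL yR)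
        rw [or_comm]
        exact or_congr (exists_congr fun i => (IHyl i).1) (exists_congr fun j => (IHxr j _).1)

theorem neg_congr {x y : PGame.{u}} (h : x ≈ y) : -x ≈ -y :=
  ⟨(neg_le_lf_neg_iff y x).1.2 h.2, (neg_le_lf_neg_iff x y).1.2 h.1⟩

theorem add_neg_equiv : ∀ (x : PGame.{u}), x + -x ≈ 0 := by
  intro x
  induction x with
  | mk xl xr xL xR IHxl IHxr =>
    constructor
    · rw [le_zero_lf]
      intro i
      obtain ⟨k, rfl⟩ := toLeftMovesAdd.surjective i
      rcases k with i | j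
      · rw [add_moveLeft_inl]
        refine lf_of_moveRight_le (j := toRightMovesAdd (Sum.inr (toRightMovesNeg i))) ?_
        rw [add_moveRight_inr, moveRight_neg', Equiv.symm_apply_apply]
        exact (IHxl i).1
      · rw [add_moveLeft_inr]
        refine lf_of_moveRight_le (j := toRightMovesAdd (Sum.inl (toLeftMovesNeg.symm j))) ?_
        rw [add_moveRight_inl, moveLeft_neg']
        exact (IHxr _).1
    · rw [zero_le_lf]
      intro j
      obtain ⟨k, rfl⟩ := toRightMovesAdd.surjective j
      rcases k with j | i
      · rw [add_moveRight_inl]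
        refine lf_of_le_moveLeft (i := toLeftMovesAdd (Sum.inr (toLeftMovesNeg j))) ?_
        rw [add_moveLeft_inr, moveLeft_neg', Equiv.symm_apply_apply]
        exact (IHxr j).2
      · rw [add_moveRight_inr]
        refine lf_of_le_moveLeft (i := toLeftMovesAdd (Sum.inl (toRightMovesNeg.symm i))) ?_
        rw [add_moveLeft_inl, moveRight_neg']
        exact (IHxl _).2

theorem neg_add_equiv (x : PGame.{u}) : -x + x ≈ 0 :=
  equiv_trans (add_comm_equiv _ _) (add_neg_equiv x)

theorem zero_lt_one : (0 : PGame.{u}) < 1 := by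
  refine lt_iff_le_not_ge.2 ⟨le_of_forall_lf (fun i => PEmpty.elim i) (fun j => PEmpty.elim j), ?_⟩
  exact PGame.not_le.2 (lf_of_le_moveLeft (i := PUnit.unit) le_rfl)

theorem star_fuzzy_zero : star.{u} ⧏ 0 ∧ 0 ⧏ star.{u} :=
  ⟨lf_of_moveRight_le (j := PUnit.unit) le_rfl, lf_of_le_moveLeft (i := PUnit.unit) le_rfl⟩

protected theorem neg_zero : -(0 : PGame.{u}) = 0 := by
  show PGame.mk _ _ _ _ = PGame.mk _ _ _ _
  congr <;> funext i <;> exact i.elim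

theorem neg_star : -star.{u} = star.{u} := by
  show PGame.mk PUnit PUnit (fun _ => -0) (fun _ => -0) = PGame.mk _ _ _ _
  rw [PGame.neg_zero]

end PGame

abbrev Game := Quotient PGame.setoid.{u}

namespace Game

instance : Zero Game.{u} := ⟨⟦0⟧⟩

instance : One Game.{u} := ⟨⟦1⟧⟩

noncomputable instance : Add Game.{u} :=
  ⟨Quotient.map₂ (· + ·) fun _ _ hx _ _ hy => PGame.add_congr hx hy⟩

instance : Neg Game.{u} :=
  ⟨Quotient.map Neg.neg fun _ _ h => PGame.neg_congr h⟩

noncomputable instance : AddCommGroupWithOne Game.{u} where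
  zero := 0
  one := 1
  add := (· + ·)
  neg := Neg.neg
  add_zero := by rintro ⟨x⟩; exact Quot.sound (PGame.add_zero_equiv x)
  zero_add := by rintro ⟨x⟩; exact Quot.sound (PGame.zero_add_equiv x)
  add_assoc := by rintro ⟨x⟩ ⟨y⟩ ⟨z⟩; exact Quot.sound (PGame.add_assoc_equiv x y z)
  add_comm := by rintro ⟨x⟩ ⟨y⟩; exact Quot.sound (PGame.add_comm_equiv x y)
  neg_add_cancel := by rintro ⟨x⟩; exact Quot.sound (PGame.neg_add_equiv x)
  nsmul := nsmulRec
  zsmul := zsmulRec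

theorem le_congr {x₁ y₁ x₂ y₂ : PGame.{u}} (hx : x₁ ≈ x₂) (hy : y₁ ≈ y₂) :
    (x₁ ≤ y₁ ↔ x₂ ≤ y₂) :=
  ⟨fun h => hx.2.trans (h.trans hy.1), fun h => hx.1.trans (h.trans hy.2)⟩

noncomputable instance : LE Game.{u} :=
  ⟨Quotient.lift₂ (fun x y : PGame.{u} => x ≤ y) fun _ _ _ _ hx hy => propext (le_congr hx hy)⟩

noncomputable instance : PartialOrder Game.{u} where
  le := (· ≤ ·)
  lt := fun a b => a ≤ b ∧ ¬ b ≤ a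
  lt_iff_le_not_ge := fun _ _ => Iff.rfl
  le_refl := by rintro ⟨x⟩; exact le_refl x
  le_trans := by rintro ⟨x⟩ ⟨y⟩ ⟨z⟩; exact @le_trans _ _ x y z
  le_antisymm := by rintro ⟨x⟩ ⟨y⟩ h₁ h₂; exact Quot.sound ⟨h₁, h₂⟩

instance : IsOrderedAddMonoid Game.{u} where
  add_le_add_left := by
    rintro ⟨a⟩ ⟨b⟩ h ⟨c⟩
    exact PGame.add_le_add_right' (x := a) (y := b) (z := c) h

end Game

namespace PGame

@[simp] theorem quot_add (x y : PGame.{u}) : (⟦x + y⟧ : Game) = ⟦x⟧ + ⟦y⟧ := rfl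

@[simp] theorem quot_neg (x : PGame.{u}) : (⟦-x⟧ : Game) = -⟦x⟧ := rfl

@[simp] theorem quot_zero : (⟦0⟧ : Game.{u}) = 0 := rfl

@[simp] theorem quot_one : (⟦1⟧ : Game.{u}) = 1 := rfl

theorem game_eq {x y : PGame.{u}} (h : x ≈ y) : (⟦x⟧ : Game) = ⟦y⟧ :=
  Quot.sound h

theorem equiv_iff_game_eq {x y : PGame.{u}} : x ≈ y ↔ (⟦x⟧ : Game) = ⟦y⟧ :=
  ⟨fun h => Quot.sound h, fun h => Quotient.exact h⟩

theorem le_iff_game_le {x y : PGame.{u}} : x ≤ y ↔ (⟦x⟧ : Game) ≤ ⟦y⟧ :=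
  ⟨fun h => h, fun h => h⟩

theorem lt_iff_game_lt {x y : PGame.{u}} : x < y ↔ (⟦x⟧ : Game) < ⟦y⟧ :=
  ⟨fun h => h, fun h => h⟩

@[simp] theorem quot_natCast : ∀ n : ℕ, (⟦(n : PGame.{u})⟧ : Game) = (n : Game)
  | 0 => rfl
  | n + 1 => by
    show (⟦(n : PGame.{u}) + 1⟧ : Game) = _
    rw [quot_add, quot_natCast n, Nat.cast_succ]
    rfl

end PGame

end SetTheory

namespace SnortFormal

open PGame

def pg : ℕ → PGame
  | 0 => 0
  | (m+1) => PGame.mk PUnit PEmpty (fun _ => pg m) PEmpty.elim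

lemma pg_rightMoves_isEmpty (m : ℕ) : IsEmpty (pg m).RightMoves := by
  cases m
  · exact ⟨fun j => j.elim⟩
  · exact ⟨fun j => j.elim⟩

lemma pg_zero_le (m : ℕ) : 0 ≤ pg m :=
  PGame.zero_le_lf.2 fun j => ((pg_rightMoves_isEmpty m).elim j)

/-- Case split on the left moves of a sum, substituting the index. -/
lemma addLeftCases {x y : PGame} {P : (x + y).LeftMoves → Prop}
    (hl : ∀ i, P (toLeftMovesAdd (Sum.inl i))) (hr : ∀ i, P (toLeftMovesAdd (Sum.inr i))) :
    ∀ k, P k := fun k => PGame.leftMoves_add_cases k hl hr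

lemma addRightCases {x y : PGame} {P : (x + y).RightMoves → Prop}
    (hl : ∀ j, P (toRightMovesAdd (Sum.inl j))) (hr : ∀ j, P (toRightMovesAdd (Sum.inr j))) :
    ∀ k, P k := fun k => PGame.rightMoves_add_cases k hl hr

lemma pg_succ_equiv (m : ℕ) : pg m + 1 ≈ pg (m+1) := by
  induction m with
  | zero =>
    constructor
    · apply PGame.le_of_forall_lf
      · intro i
        obtain ⟨k, rfl⟩ : ∃ k, toLeftMovesAdd k = i := ⟨_, toLeftMovesAdd.apply_symm_apply i⟩
        cases k with
        | inl i' => exact i'.elim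
        | inr i' =>
          rw [PGame.add_moveLeft_inr]
          exact PGame.lf_of_le_moveLeft (i := PUnit.unit) (PGame.add_zero_equiv _).1
      · intro j
        exact ((pg_rightMoves_isEmpty 1).elim j)
    · apply PGame.le_of_forall_lf
      · intro i
        refine PGame.lf_of_le_moveLeft
          (i := toLeftMovesAdd (Sum.inr (Equiv.refl ((1 : PGame).LeftMoves) PUnit.unit))) ?_
        rw [PGame.add_moveLeft_inr]
        exact (PGame.add_zero_equiv _).2
      · intro j
        obtain ⟨k, rfl⟩ : ∃ k, toRightMovesAdd k = j := ⟨_, toRightMovesAdd.apply_symm_apply j⟩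
        cases k with
        | inl j' => exact j'.elim
        | inr j' => exact j'.elim
  | succ m ih =>
    constructor
    · apply PGame.le_of_forall_lf
      · intro i
        obtain ⟨k, rfl⟩ : ∃ k, toLeftMovesAdd k = i := ⟨_, toLeftMovesAdd.apply_symm_apply i⟩
        cases k with
        | inl i' =>
          rw [PGame.add_moveLeft_inl]
          exact PGame.lf_of_le_moveLeft (i := PUnit.unit) ih.1
        | inr i' =>
          rw [PGame.add_moveLeft_inr]
          exact PGame.lf_of_le_moveLeft (i := PUnit.unit) (PGame.add_zero_equiv _).1
      · intro j
        exact ((pg_rightMoves_isEmpty (m+2)).elim j)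
    · apply PGame.le_of_forall_lf
      · intro i
        refine PGame.lf_of_le_moveLeft
          (i := toLeftMovesAdd (Sum.inr (Equiv.refl ((1 : PGame).LeftMoves) PUnit.unit))) ?_
        rw [PGame.add_moveLeft_inr]
        exact (PGame.add_zero_equiv _).2
      · intro j
        obtain ⟨k, rfl⟩ : ∃ k, toRightMovesAdd k = j := ⟨_, toRightMovesAdd.apply_symm_apply j⟩
        cases k with
        | inl j' => exact j'.elim
        | inr j' => exact j'.elim

lemma quot_pg_succ (m : ℕ) : (⟦pg (m+1)⟧ : Game) = ⟦pg m⟧ + 1 := by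
  rw [← PGame.game_eq (pg_succ_equiv m), PGame.quot_add, PGame.quot_one]

lemma quot_pg (m : ℕ) : (⟦pg m⟧ : Game) = (m : Game) := by
  induction m with
  | zero => rfl
  | succ m ih => rw [quot_pg_succ, ih, Nat.cast_add, Nat.cast_one]

lemma natCast_equiv_pg (m : ℕ) : ((m : ℕ) : PGame) ≈ pg m :=
  PGame.equiv_iff_game_eq.2 (by rw [PGame.quot_natCast, quot_pg])

lemma ofPair_congr {A A' B B' : PGame} (hA : A ≈ A') (hB : B ≈ B') :
    ofPair A B ≈ ofPair A' B' := by
  constructor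
  · apply PGame.le_of_forall_lf
    · intro i
      exact PGame.lf_of_le_moveLeft (i := PUnit.unit) hA.1
    · intro j
      exact PGame.lf_of_moveRight_le (j := PUnit.unit) hB.1
  · apply PGame.le_of_forall_lf
    · intro i
      exact PGame.lf_of_le_moveLeft (i := PUnit.unit) hA.2
    · intro j
      exact PGame.lf_of_moveRight_le (j := PUnit.unit) hB.2

@[simp] lemma ofPair_moveLeft (A B : PGame) (i) : (ofPair A B).moveLeft i = A := rfl
@[simp] lemma ofPair_moveRight (A B : PGame) (j) : (ofPair A B).moveRight j = B := rfl
@[simp] lemma star_moveLeft (i) : PGame.star.moveLeft i = 0 := rfl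
@[simp] lemma star_moveRight (j) : PGame.star.moveRight j = 0 := rfl

lemma game_zero_lt_one : (0 : Game) < 1 := PGame.lt_iff_game_lt.1 PGame.zero_lt_one

lemma neg_one_le_ofPair (a : PGame) : (-1 : Game) ≤ ⟦ofPair a 0⟧ := by
  have h : (0 : PGame) ≤ ofPair a 0 + 1 := by
    rw [PGame.zero_le_lf]
    intro j
    obtain ⟨k, rfl⟩ : ∃ k, PGame.toRightMovesAdd k = j := ⟨_, (PGame.toRightMovesAdd).apply_symm_apply j⟩
    cases k with
    | inl j' =>
      rw [PGame.add_moveRight_inl, ← PGame.not_le]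
      intro h
      rw [PGame.le_iff_game_le] at h
      simp only [PGame.quot_add, ofPair_moveRight, PGame.quot_zero, PGame.quot_one, zero_add] at h
      exact game_zero_lt_one.not_ge h
    | inr j' => exact j'.elim
  rw [PGame.le_iff_game_le] at h
  simp only [PGame.quot_add, PGame.quot_zero, PGame.quot_one] at h
  calc (-1 : Game) = -1 + 0 := by abel
    _ ≤ -1 + (⟦ofPair a 0⟧ + 1) := add_le_add_right h _
    _ = ⟦ofPair a 0⟧ := by abel
  

lemma core_even (a : PGame) (hae : IsEmpty a.RightMoves)
    (haL : ∀ i, (⟦a.moveLeft i⟧ : Game) + 1 ≤ ⟦a⟧) :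
    (⟦ofPair a 0⟧ : Game) + ⟦ofPair a 0⟧ = ⟦a⟧ := by
  have h1 : ofPair a 0 + ofPair a 0 + (-a) ≤ 0 := by
    rw [PGame.le_zero_lf]
    intro i
    obtain ⟨k, rfl⟩ : ∃ k, PGame.toLeftMovesAdd k = i :=
      ⟨_, (PGame.toLeftMovesAdd).apply_symm_apply i⟩
    cases k with
    | inl i2 =>
      rw [PGame.add_moveLeft_inl]
      obtain ⟨k2, rfl⟩ : ∃ k2, PGame.toLeftMovesAdd k2 = i2 :=
        ⟨_, (PGame.toLeftMovesAdd).apply_symm_apply i2⟩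
      cases k2 with
      | inl u =>
        rw [PGame.add_moveLeft_inl]
        refine PGame.lf_of_moveRight_le (j := PGame.toRightMovesAdd (Sum.inl
          (PGame.toRightMovesAdd (Sum.inr (Equiv.refl ((ofPair a 0).RightMoves) PUnit.unit))))) ?_
        rw [PGame.add_moveRight_inl, PGame.add_moveRight_inr, PGame.le_iff_game_le]
        simp only [PGame.quot_add, PGame.quot_neg, ofPair_moveLeft, ofPair_moveRight,
          PGame.quot_zero]
        exact le_of_eq (by abel)
      | inr u =>
        rw [PGame.add_moveLeft_inr]
        refine PGame.lf_of_moveRight_le (j := PGame.toRightMovesAdd (Sum.inl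
          (PGame.toRightMovesAdd (Sum.inl (Equiv.refl ((ofPair a 0).RightMoves) PUnit.unit))))) ?_
        rw [PGame.add_moveRight_inl, PGame.add_moveRight_inl, PGame.le_iff_game_le]
        simp only [PGame.quot_add, PGame.quot_neg, ofPair_moveLeft, ofPair_moveRight,
          PGame.quot_zero]
        exact le_of_eq (by abel)
    | inr i2 =>
      exact (hae.elim (PGame.toLeftMovesNeg.symm i2))
  have h2 : (0 : PGame) ≤ ofPair a 0 + ofPair a 0 + (-a) := by
    rw [PGame.zero_le_lf]
    intro j
    obtain ⟨k, rfl⟩ : ∃ k, PGame.toRightMovesAdd k = j :=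
      ⟨_, (PGame.toRightMovesAdd).apply_symm_apply j⟩
    cases k with
    | inl j2 =>
      rw [PGame.add_moveRight_inl]
      obtain ⟨k2, rfl⟩ : ∃ k2, PGame.toRightMovesAdd k2 = j2 :=
        ⟨_, (PGame.toRightMovesAdd).apply_symm_apply j2⟩
      cases k2 with
      | inl u =>
        rw [PGame.add_moveRight_inl]
        refine PGame.lf_of_le_moveLeft (i := PGame.toLeftMovesAdd (Sum.inl
          (PGame.toLeftMovesAdd (Sum.inr (Equiv.refl ((ofPair a 0).LeftMoves) PUnit.unit))))) ?_
        rw [PGame.add_moveLeft_inl, PGame.add_moveLeft_inr, PGame.le_iff_game_le]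
        simp only [PGame.quot_add, PGame.quot_neg, ofPair_moveLeft, ofPair_moveRight,
          PGame.quot_zero]
        exact le_of_eq (by abel)
      | inr u =>
        rw [PGame.add_moveRight_inr]
        refine PGame.lf_of_le_moveLeft (i := PGame.toLeftMovesAdd (Sum.inl
          (PGame.toLeftMovesAdd (Sum.inl (Equiv.refl ((ofPair a 0).LeftMoves) PUnit.unit))))) ?_
        rw [PGame.add_moveLeft_inl, PGame.add_moveLeft_inl, PGame.le_iff_game_le]
        simp only [PGame.quot_add, PGame.quot_neg, ofPair_moveLeft, ofPair_moveRight,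
          PGame.quot_zero]
        exact le_of_eq (by abel)
    | inr j2 =>
      rw [PGame.add_moveRight_inr, PGame.moveRight_neg']
      refine PGame.lf_of_le_moveLeft (i := PGame.toLeftMovesAdd (Sum.inl
        (PGame.toLeftMovesAdd (Sum.inl (Equiv.refl ((ofPair a 0).LeftMoves) PUnit.unit))))) ?_
      rw [PGame.add_moveLeft_inl, PGame.add_moveLeft_inl, PGame.le_iff_game_le]
      simp only [PGame.quot_add, PGame.quot_neg, ofPair_moveLeft, PGame.quot_zero]
      have hL := haL (PGame.toRightMovesNeg.symm j2)
      have hG := neg_one_le_ofPair a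
      calc (0 : Game) = 1 + -1 := by abel
        _ ≤ 1 + ⟦ofPair a 0⟧ := add_le_add_right hG 1
        _ = (⟦a.moveLeft (PGame.toRightMovesNeg.symm j2)⟧ + 1) + ⟦ofPair a 0⟧
              + -⟦a.moveLeft (PGame.toRightMovesNeg.symm j2)⟧ := by abel
        _ ≤ ⟦a⟧ + ⟦ofPair a 0⟧ + -⟦a.moveLeft (PGame.toRightMovesNeg.symm j2)⟧ := by
              exact add_le_add_left (add_le_add_left hL _) _
  have h3 := PGame.game_eq (⟨h1, h2⟩ : ofPair a 0 + ofPair a 0 + (-a) ≈ 0)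
  simp only [PGame.quot_add, PGame.quot_neg, PGame.quot_zero] at h3
  calc (⟦ofPair a 0⟧ : Game) + ⟦ofPair a 0⟧
      = ⟦ofPair a 0⟧ + ⟦ofPair a 0⟧ + -⟦a⟧ + ⟦a⟧ := by abel
    _ = 0 + ⟦a⟧ := by rw [h3]
    _ = ⟦a⟧ := zero_add _


lemma star_le_one : PGame.star ≤ 1 := by
  apply PGame.le_of_forall_lf
  · intro i; exact PGame.lf_of_lt PGame.zero_lt_one
  · intro j; exact j.elim

lemma game_star_le_one : (⟦PGame.star⟧ : Game) ≤ 1 := by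
  simpa using PGame.le_iff_game_le.1 star_le_one

lemma game_star_add_star : (⟦PGame.star⟧ : Game) + ⟦PGame.star⟧ = 0 := by
  calc (⟦PGame.star⟧ : Game) + ⟦PGame.star⟧ = ⟦PGame.star⟧ + ⟦-PGame.star⟧ := by
        rw [PGame.neg_star]
    _ = ⟦PGame.star⟧ + -⟦PGame.star⟧ := by rw [PGame.quot_neg]
    _ = 0 := add_neg_cancel _

lemma zero_le_ofPair_star (a : PGame) : 0 ≤ ofPair a PGame.star :=
  PGame.zero_le_lf.2 fun _ => PGame.star_fuzzy_zero.2

lemma ofPair_star_le (a : PGame) (hae : IsEmpty a.RightMoves) (ha1 : (1 : Game) ≤ ⟦a⟧) :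
    (⟦ofPair a PGame.star⟧ : Game) ≤ ⟦a⟧ + ⟦PGame.star⟧ := by
  have hsa : PGame.star ≤ a := by
    rw [PGame.le_iff_game_le]
    exact game_star_le_one.trans ha1
  have h : ofPair a PGame.star ≤ a + PGame.star := by
    apply PGame.le_of_forall_lf
    · intro i
      rw [← PGame.not_le]
      intro h
      rw [PGame.le_iff_game_le] at h
      simp only [PGame.quot_add, ofPair_moveLeft] at h
      have hs0 : (⟦PGame.star⟧ : Game) ≤ 0 := by
        calc (⟦PGame.star⟧ : Game) = -⟦a⟧ + (⟦a⟧ + ⟦PGame.star⟧) := by abel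
          _ ≤ -⟦a⟧ + ⟦a⟧ := add_le_add_right h _
          _ = 0 := neg_add_cancel _
      exact (PGame.not_le.2 PGame.star_fuzzy_zero.2)
        (PGame.le_iff_game_le.2 (by simpa using hs0))
    · intro j
      obtain ⟨k, rfl⟩ : ∃ k, PGame.toRightMovesAdd k = j :=
        ⟨_, (PGame.toRightMovesAdd).apply_symm_apply j⟩
      cases k with
      | inl j' => exact hae.elim j'
      | inr j' =>
        rw [PGame.add_moveRight_inr, ← PGame.not_le]
        intro h
        have h2 := PGame.lf_moveRight_of_le h (Equiv.refl ((ofPair a PGame.star).RightMoves) PUnit.unit)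
        have h3 : PGame.star ≤ a + PGame.star.moveRight j' :=
          hsa.trans (PGame.add_zero_equiv a).2
        exact (PGame.not_le.2 h2) h3
  rw [PGame.le_iff_game_le] at h
  simpa using h

lemma core_odd (a : PGame) (hae : IsEmpty a.RightMoves)
    (haL : ∀ i, (⟦a.moveLeft i⟧ : Game) + 1 ≤ ⟦a⟧) (ha1 : (1 : Game) ≤ ⟦a⟧) :
    (⟦ofPair a PGame.star⟧ : Game) + ⟦ofPair a PGame.star⟧ = ⟦a⟧ + ⟦PGame.star⟧ := by
  have hG0 : (0 : Game) ≤ ⟦ofPair a PGame.star⟧ :=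
    PGame.le_iff_game_le.1 (zero_le_ofPair_star a)
  have hL1 := ofPair_star_le a hae ha1
  have h1 : ofPair a PGame.star + ofPair a PGame.star + (-a) + (-PGame.star) ≤ 0 := by
    rw [PGame.le_zero_lf]
    intro i
    obtain ⟨k, rfl⟩ : ∃ k, PGame.toLeftMovesAdd k = i :=
      ⟨_, (PGame.toLeftMovesAdd).apply_symm_apply i⟩
    cases k with
    | inl i3 =>
      rw [PGame.add_moveLeft_inl]
      obtain ⟨k2, rfl⟩ : ∃ k2, PGame.toLeftMovesAdd k2 = i3 :=
        ⟨_, (PGame.toLeftMovesAdd).apply_symm_apply i3⟩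
      cases k2 with
      | inl i2 =>
        rw [PGame.add_moveLeft_inl]
        obtain ⟨k3, rfl⟩ : ∃ k3, PGame.toLeftMovesAdd k3 = i2 :=
          ⟨_, (PGame.toLeftMovesAdd).apply_symm_apply i2⟩
        cases k3 with
        | inl u =>
          rw [PGame.add_moveLeft_inl]
          refine PGame.lf_of_moveRight_le (j := PGame.toRightMovesAdd (Sum.inl
            (PGame.toRightMovesAdd (Sum.inl (PGame.toRightMovesAdd (Sum.inr
              (Equiv.refl ((ofPair a PGame.star).RightMoves) PUnit.unit))))))) ?_
          rw [PGame.add_moveRight_inl, PGame.add_moveRight_inl, PGame.add_moveRight_inr,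
            PGame.le_iff_game_le]
          simp only [PGame.quot_add, PGame.quot_neg, ofPair_moveLeft, ofPair_moveRight,
            PGame.quot_zero]
          exact le_of_eq (by abel)
        | inr u =>
          rw [PGame.add_moveLeft_inr]
          refine PGame.lf_of_moveRight_le (j := PGame.toRightMovesAdd (Sum.inl
            (PGame.toRightMovesAdd (Sum.inl (PGame.toRightMovesAdd (Sum.inl
              (Equiv.refl ((ofPair a PGame.star).RightMoves) PUnit.unit))))))) ?_
          rw [PGame.add_moveRight_inl, PGame.add_moveRight_inl, PGame.add_moveRight_inl,
            PGame.le_iff_game_le]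
          simp only [PGame.quot_add, PGame.quot_neg, ofPair_moveLeft, ofPair_moveRight,
            PGame.quot_zero]
          exact le_of_eq (by abel)
      | inr i2 =>
        exact (hae.elim (PGame.toLeftMovesNeg.symm i2))
    | inr i3 =>
      rw [PGame.add_moveLeft_inr, PGame.moveLeft_neg']
      refine PGame.lf_of_moveRight_le (j := PGame.toRightMovesAdd (Sum.inl
        (PGame.toRightMovesAdd (Sum.inl (PGame.toRightMovesAdd (Sum.inl
          (Equiv.refl ((ofPair a PGame.star).RightMoves) PUnit.unit))))))) ?_
      rw [PGame.add_moveRight_inl, PGame.add_moveRight_inl, PGame.add_moveRight_inl,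
        PGame.le_iff_game_le]
      simp only [PGame.quot_add, PGame.quot_neg, ofPair_moveRight, star_moveRight,
        PGame.quot_zero, neg_zero, add_zero]
      calc (⟦PGame.star⟧ : Game) + ⟦ofPair a PGame.star⟧ + -⟦a⟧
          ≤ ⟦PGame.star⟧ + (⟦a⟧ + ⟦PGame.star⟧) + -⟦a⟧ :=
            add_le_add_left (add_le_add_right hL1 _) _
        _ = ⟦PGame.star⟧ + ⟦PGame.star⟧ := by abel
        _ = 0 := game_star_add_star
  have h2 : (0 : PGame) ≤ ofPair a PGame.star + ofPair a PGame.star + (-a) + (-PGame.star) := by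
    rw [PGame.zero_le_lf]
    intro j
    obtain ⟨k, rfl⟩ : ∃ k, PGame.toRightMovesAdd k = j :=
      ⟨_, (PGame.toRightMovesAdd).apply_symm_apply j⟩
    cases k with
    | inl j3 =>
      rw [PGame.add_moveRight_inl]
      obtain ⟨k2, rfl⟩ : ∃ k2, PGame.toRightMovesAdd k2 = j3 :=
        ⟨_, (PGame.toRightMovesAdd).apply_symm_apply j3⟩
      cases k2 with
      | inl j2 =>
        rw [PGame.add_moveRight_inl]
        obtain ⟨k3, rfl⟩ : ∃ k3, PGame.toRightMovesAdd k3 = j2 :=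
          ⟨_, (PGame.toRightMovesAdd).apply_symm_apply j2⟩
        cases k3 with
        | inl u =>
          rw [PGame.add_moveRight_inl]
          refine PGame.lf_of_le_moveLeft (i := PGame.toLeftMovesAdd (Sum.inl
            (PGame.toLeftMovesAdd (Sum.inl (PGame.toLeftMovesAdd (Sum.inr
              (Equiv.refl ((ofPair a PGame.star).LeftMoves) PUnit.unit))))))) ?_
          rw [PGame.add_moveLeft_inl, PGame.add_moveLeft_inl, PGame.add_moveLeft_inr,
            PGame.le_iff_game_le]
          simp only [PGame.quot_add, PGame.quot_neg, ofPair_moveLeft, ofPair_moveRight,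
            PGame.quot_zero]
          exact le_of_eq (by abel)
        | inr u =>
          rw [PGame.add_moveRight_inr]
          refine PGame.lf_of_le_moveLeft (i := PGame.toLeftMovesAdd (Sum.inl
            (PGame.toLeftMovesAdd (Sum.inl (PGame.toLeftMovesAdd (Sum.inl
              (Equiv.refl ((ofPair a PGame.star).LeftMoves) PUnit.unit))))))) ?_
          rw [PGame.add_moveLeft_inl, PGame.add_moveLeft_inl, PGame.add_moveLeft_inl,
            PGame.le_iff_game_le]
          simp only [PGame.quot_add, PGame.quot_neg, ofPair_moveLeft, ofPair_moveRight,
            PGame.quot_zero]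
          exact le_of_eq (by abel)
      | inr j2 =>
        rw [PGame.add_moveRight_inr, PGame.moveRight_neg']
        refine PGame.lf_of_le_moveLeft (i := PGame.toLeftMovesAdd (Sum.inl
          (PGame.toLeftMovesAdd (Sum.inl (PGame.toLeftMovesAdd (Sum.inl
            (Equiv.refl ((ofPair a PGame.star).LeftMoves) PUnit.unit))))))) ?_
        rw [PGame.add_moveLeft_inl, PGame.add_moveLeft_inl, PGame.add_moveLeft_inl,
          PGame.le_iff_game_le]
        simp only [PGame.quot_add, PGame.quot_neg, ofPair_moveLeft, PGame.quot_zero]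
        have hL := haL (PGame.toRightMovesNeg.symm j2)
        calc (0 : Game) = (1 + 0 + -1 : Game) := by abel
          _ ≤ 1 + ⟦ofPair a PGame.star⟧ + -⟦PGame.star⟧ :=
              add_le_add (add_le_add_right hG0 1) (neg_le_neg game_star_le_one)
          _ = (⟦a.moveLeft (PGame.toRightMovesNeg.symm j2)⟧ + 1) + ⟦ofPair a PGame.star⟧
                + -⟦a.moveLeft (PGame.toRightMovesNeg.symm j2)⟧ + -⟦PGame.star⟧ := by abel
          _ ≤ ⟦a⟧ + ⟦ofPair a PGame.star⟧
                + -⟦a.moveLeft (PGame.toRightMovesNeg.symm j2)⟧ + -⟦PGame.star⟧ :=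
              add_le_add_left (add_le_add_left (add_le_add_left hL _) _) _
    | inr j3 =>
      rw [PGame.add_moveRight_inr, PGame.moveRight_neg']
      refine PGame.lf_of_le_moveLeft (i := PGame.toLeftMovesAdd (Sum.inl
        (PGame.toLeftMovesAdd (Sum.inl (PGame.toLeftMovesAdd (Sum.inl
          (Equiv.refl ((ofPair a PGame.star).LeftMoves) PUnit.unit))))))) ?_
      rw [PGame.add_moveLeft_inl, PGame.add_moveLeft_inl, PGame.add_moveLeft_inl,
        PGame.le_iff_game_le]
      simp only [PGame.quot_add, PGame.quot_neg, ofPair_moveLeft, star_moveLeft,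
        PGame.quot_zero, neg_zero, add_zero]
      calc (0 : Game) = ⟦a⟧ + 0 + -⟦a⟧ := by abel
        _ ≤ ⟦a⟧ + ⟦ofPair a PGame.star⟧ + -⟦a⟧ :=
            add_le_add_left (add_le_add_right hG0 _) _
  have h3 := PGame.game_eq
    (⟨h1, h2⟩ : ofPair a PGame.star + ofPair a PGame.star + (-a) + (-PGame.star) ≈ 0)
  simp only [PGame.quot_add, PGame.quot_neg, PGame.quot_zero] at h3
  calc (⟦ofPair a PGame.star⟧ : Game) + ⟦ofPair a PGame.star⟧
      = ⟦ofPair a PGame.star⟧ + ⟦ofPair a PGame.star⟧ + -⟦a⟧ + -⟦PGame.star⟧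
          + (⟦a⟧ + ⟦PGame.star⟧) := by abel
    _ = 0 + (⟦a⟧ + ⟦PGame.star⟧) := by rw [h3]
    _ = ⟦a⟧ + ⟦PGame.star⟧ := zero_add _



/-- `n + {n+1 | s(n)} + {n+1 | s(n)} ≈ (2n+1) + s(n)`. -/
theorem sum_two_tinted_stars (n : ℕ) (hn : 1 ≤ n) :
    (n : PGame) + ofPair ((n+1 : ℕ) : PGame) (sgame n)
        + ofPair ((n+1 : ℕ) : PGame) (sgame n)
      ≈ ((2*n+1 : ℕ) : PGame) + sgame n := by
  rw [PGame.equiv_iff_game_eq]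
  simp only [PGame.quot_add]
  rw [PGame.game_eq (ofPair_congr (natCast_equiv_pg (n+1)) (PGame.equiv_rfl)), add_assoc]
  rcases Nat.even_or_odd n with he | ho
  · rw [show sgame n = 0 from if_pos he,
      core_even (pg (n+1)) (pg_rightMoves_isEmpty (n+1))
        (fun i => le_of_eq (quot_pg_succ n).symm),
      quot_pg, PGame.quot_zero, add_zero,
      show (2*n+1 : ℕ) = n + (n+1) from by omega,
      PGame.quot_natCast, PGame.quot_natCast]
    simp only [Nat.cast_add, Nat.cast_one]
  · rw [show sgame n = PGame.star from if_neg (Nat.not_even_iff_odd.2 ho),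
      core_odd (pg (n+1)) (pg_rightMoves_isEmpty (n+1))
        (fun i => le_of_eq (quot_pg_succ n).symm)
        (by rw [quot_pg_succ]
            calc (1 : Game) = 0 + 1 := (zero_add 1).symm
              _ ≤ ⟦pg n⟧ + 1 := add_le_add_left (PGame.le_iff_game_le.1 (pg_zero_le n)) 1),
      quot_pg,
      show (2*n+1 : ℕ) = n + (n+1) from by omega,
      PGame.quot_natCast, PGame.quot_natCast]
    simp only [Nat.cast_add, Nat.cast_one]
    abel
end SnortFormal
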